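/- If vᵢ is an eigenvector of the normalized Laplacian 𝓛_{Gᵢ} with eigenvalue λᵢ for i = 1,…,n, then ⊗ᵢvᵢ is an eigenvector of the normalized Laplacian of the Kronecker product graph ⊗ᵢGᵢ with eigenvalue 1 − ∏ᵢ(1 − λᵢ). -/

import Mathlib

/-!
Kronecker products act factorwise on tensor products of vectors, and the normalized adjacency
matrix `D^{-1/2} A D^{-1/2}` of the Kronecker product graph is the Kronecker product of the
factors' normalized adjacency matrices. Hence `⊗ᵢ vᵢ` is an eigenvector of it with eigenvalue
`∏ᵢ (1 - λᵢ)`, and of `𝓛 = 1 - D^{-1/2} A D^{-1/2}` with eigenvalue `1 - ∏ᵢ (1 - λᵢ)`.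
-/

open Matrix

namespace Matrix

variable {ι R : Type*} [Fintype ι] {κ κ' : ι → Type*}

def piTensor [CommMonoid R] (v : ∀ i, κ i → R) : (∀ i, κ i) → R :=
  fun x => ∏ i, v i (x i)

def piKronecker [CommMonoid R] (A : ∀ i, Matrix (κ i) (κ' i) R) :
    Matrix (∀ i, κ i) (∀ i, κ' i) R :=
  of fun x y => ∏ i, A i (x i) (y i)

theorem piTensor_ne_zero [CommMonoidWithZero R] [NoZeroDivisors R] [Nontrivial R]
    {v : ∀ i, κ i → R} (hv : ∀ i, v i ≠ 0) : piTensor v ≠ 0 := by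
  choose x hx using fun i => Function.ne_iff.mp (hv i)
  exact Function.ne_iff.mpr ⟨x, Finset.prod_ne_zero_iff.mpr fun i _ => hx i⟩

theorem one_sub_mulVec_eq_smul_iff {m : Type*} [Fintype m] [DecidableEq m] [Ring R]
    (M : Matrix m m R) (v : m → R) (c : R) :
    (1 - M) *ᵥ v = c • v ↔ M *ᵥ v = (1 - c) • v := by
  rw [sub_mulVec, one_mulVec, sub_smul, one_smul, sub_eq_iff_eq_add, eq_sub_iff_add_eq',
    eq_comm, add_comm]

variable [CommSemiring R]

theorem piTensor_smul (c : ι → R) (v : ∀ i, κ i → R) :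
    piTensor (fun i => c i • v i) = (∏ i, c i) • piTensor v := by
  ext x
  simp only [piTensor, Pi.smul_apply, smul_eq_mul, Finset.prod_mul_distrib]

theorem diagonal_piTensor_mul_piKronecker [DecidableEq ι] [∀ i, Fintype (κ i)]
    [∀ i, DecidableEq (κ i)] [DecidableEq (∀ i, κ i)]
    (d : ∀ i, κ i → R) (A : ∀ i, Matrix (κ i) (κ' i) R) :
    diagonal (piTensor d) * piKronecker A = piKronecker fun i => diagonal (d i) * A i := by
  ext x y
  simp only [diagonal_mul, piKronecker, piTensor, of_apply, Finset.prod_mul_distrib]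

theorem piKronecker_mul_diagonal_piTensor [DecidableEq ι] [∀ i, Fintype (κ' i)]
    [∀ i, DecidableEq (κ' i)] [DecidableEq (∀ i, κ' i)]
    (A : ∀ i, Matrix (κ i) (κ' i) R) (d : ∀ i, κ' i → R) :
    piKronecker A * diagonal (piTensor d) = piKronecker fun i => A i * diagonal (d i) := by
  ext x y
  simp only [mul_diagonal, piKronecker, piTensor, of_apply, Finset.prod_mul_distrib]

theorem piKronecker_mulVec_piTensor [DecidableEq ι] [∀ i, Fintype (κ' i)]
    (A : ∀ i, Matrix (κ i) (κ' i) R) (v : ∀ i, κ' i → R) :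
    piKronecker A *ᵥ piTensor v = piTensor fun i => A i *ᵥ v i := by
  ext x
  simp only [mulVec, dotProduct, piKronecker, piTensor, of_apply, ← Finset.prod_mul_distrib]
  rw [Finset.prod_univ_sum, Fintype.piFinset_univ]

theorem piKronecker_mulVec_piTensor_of_mulVec_eq_smul [DecidableEq ι] [∀ i, Fintype (κ i)]
    {A : ∀ i, Matrix (κ i) (κ i) R} {v : ∀ i, κ i → R} {μ : ι → R}
    (h : ∀ i, A i *ᵥ v i = μ i • v i) :
    piKronecker A *ᵥ piTensor v = (∏ i, μ i) • piTensor v := by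
  rw [piKronecker_mulVec_piTensor, funext h, piTensor_smul]

end Matrix

theorem stmt10_general (n : ℕ) (K : Fin n → ℕ) (G : ∀ i, SimpleGraph (Fin (K i)))
    [∀ i, DecidableRel (G i).Adj]
    (lam : Fin n → ℝ) (v : ∀ i, Fin (K i) → ℝ) (hv : ∀ i, v i ≠ 0)
    (heig : ∀ i,
      ((1 : Matrix (Fin (K i)) (Fin (K i)) ℝ) -
          Matrix.diagonal (fun u => (Real.sqrt ((G i).degree u))⁻¹) * (G i).adjMatrix ℝ *
            Matrix.diagonal (fun u => (Real.sqrt ((G i).degree u))⁻¹)) *ᵥ v i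
        = lam i • v i) :
    (fun x : ∀ i, Fin (K i) => ∏ i, v i (x i)) ≠ 0 ∧
      ((1 : Matrix (∀ i, Fin (K i)) (∀ i, Fin (K i)) ℝ) -
          Matrix.diagonal (fun x : ∀ i, Fin (K i) => ∏ i, (Real.sqrt ((G i).degree (x i)))⁻¹) *
            (Matrix.of fun x y : ∀ i, Fin (K i) => ∏ i, (G i).adjMatrix ℝ (x i) (y i)) *
            Matrix.diagonal (fun x : ∀ i, Fin (K i) => ∏ i, (Real.sqrt ((G i).degree (x i)))⁻¹))
          *ᵥ (fun x : ∀ i, Fin (K i) => ∏ i, v i (x i))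
        = (1 - ∏ i, (1 - lam i)) • (fun x : ∀ i, Fin (K i) => ∏ i, v i (x i)) := by
  set d : ∀ i, Fin (K i) → ℝ := fun i u => (Real.sqrt ((G i).degree u))⁻¹
  refine ⟨piTensor_ne_zero hv, ?_⟩
  have hnormAdj i := (one_sub_mulVec_eq_smul_iff _ (v i) (lam i)).mp (heig i)
  change (1 - diagonal (piTensor d) * piKronecker (fun i => (G i).adjMatrix ℝ) *
    diagonal (piTensor d)) *ᵥ piTensor v = (1 - ∏ i, (1 - lam i)) • piTensor v
  rw [one_sub_mulVec_eq_smul_iff, sub_sub_cancel, diagonal_piTensor_mul_piKronecker,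
    piKronecker_mul_diagonal_piTensor, piKronecker_mulVec_piTensor_of_mulVec_eq_smul hnormAdj]

/-- If `vᵢ` is an eigenvector of the normalized Laplacian `𝓛_{Gᵢ}` with eigenvalue `λᵢ`, then
`⊗ᵢ vᵢ` is an eigenvector of the normalized Laplacian of the Kronecker product graph `⊗ᵢGᵢ`
with eigenvalue `1 − ∏ᵢ(1 − λᵢ)`. -/
theorem stmt10 (n : ℕ) (K : Fin n → ℕ) (G : ∀ i, SimpleGraph (Fin (K i)))
    [∀ i, DecidableRel (G i).Adj]
    (hdeg : ∀ i v, 0 < (G i).degree v)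
    (lam : Fin n → ℝ) (v : ∀ i, Fin (K i) → ℝ) (hv : ∀ i, v i ≠ 0)
    (heig : ∀ i,
      ((1 : Matrix (Fin (K i)) (Fin (K i)) ℝ) -
          Matrix.diagonal (fun u => (Real.sqrt ((G i).degree u))⁻¹) * (G i).adjMatrix ℝ *
            Matrix.diagonal (fun u => (Real.sqrt ((G i).degree u))⁻¹)) *ᵥ v i
        = lam i • v i) :
    (fun x : ∀ i, Fin (K i) => ∏ i, v i (x i)) ≠ 0 ∧
      ((1 : Matrix (∀ i, Fin (K i)) (∀ i, Fin (K i)) ℝ) -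
          Matrix.diagonal (fun x : ∀ i, Fin (K i) => ∏ i, (Real.sqrt ((G i).degree (x i)))⁻¹) *
            (Matrix.of fun x y : ∀ i, Fin (K i) => ∏ i, (G i).adjMatrix ℝ (x i) (y i)) *
            Matrix.diagonal (fun x : ∀ i, Fin (K i) => ∏ i, (Real.sqrt ((G i).degree (x i)))⁻¹))
          *ᵥ (fun x : ∀ i, Fin (K i) => ∏ i, v i (x i))
        = (1 - ∏ i, (1 - lam i)) • (fun x : ∀ i, Fin (K i) => ∏ i, v i (x i)) :=
  stmt10_general n K G lam v hv heig
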